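/- For m = 4 (and generally m > 3), the inclusion R^{pr}_{0,3}(Z/mZ) ⊆ pr(BZ(SL_m(C))) is strict: the vector (1,0,...,0,1; 0,1,0,...,0; 0,...,0,1,0) ∈ Z^{3(m−1)} lies in pr(BZ(SL_m(C))) (it is the projection of an explicit 0/1 BZ triangle) but does not lie in R^{pr}_{0,3}(Z/mZ). -/

import Mathlib

namespace BZsetup

variable (m : ℕ)

/-- Exactly one of the three coordinates is odd. -/
def oneOdd (p : ℤ × ℤ × ℤ) : Prop :=
  (Odd p.1 ∧ Even p.2.1 ∧ Even p.2.2) ∨ (Even p.1 ∧ Odd p.2.1 ∧ Even p.2.2) ∨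
    (Even p.1 ∧ Even p.2.1 ∧ Odd p.2.2)

/-- `G_m`: the integer points `(a,b,c)` with `a+b+c = 2m−3`, `a,b,c ≥ 0`, and exactly
one coordinate odd (the vertices of the hexagons and triangles). -/
def Gset : Set (ℤ × ℤ × ℤ) :=
  {p | p.1 + p.2.1 + p.2.2 = 2 * (m : ℤ) - 3 ∧
    0 ≤ p.1 ∧ 0 ≤ p.2.1 ∧ 0 ≤ p.2.2 ∧ oneOdd p}

/-- The Berenstein–Zelevinsky semigroup `BZ(SL_m(ℂ))`: nonnegative integer labelings
of `G_m` satisfying, for every hexagon (centered at a point `h` of the triangle with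
all coordinates odd), the three conditions `x(ξ₁)+x(ξ₂) = x(ξ'₁)+x(ξ'₂)` for the three
opposite pairs of edges of the hexagon. -/
def BZ : Set ((ℤ × ℤ × ℤ) → ℤ) :=
  {x | (∀ p, p ∉ Gset m → x p = 0) ∧ (∀ p, 0 ≤ x p) ∧
    (∀ h : ℤ × ℤ × ℤ, Odd h.1 → Odd h.2.1 → Odd h.2.2 →
      0 ≤ h.1 → 0 ≤ h.2.1 → 0 ≤ h.2.2 →
      h.1 + h.2.1 + h.2.2 = 2 * (m : ℤ) - 3 →
      x (h.1 + 1, h.2.1 - 1, h.2.2) + x (h.1 + 1, h.2.1, h.2.2 - 1)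
          = x (h.1 - 1, h.2.1 + 1, h.2.2) + x (h.1 - 1, h.2.1, h.2.2 + 1) ∧
      x (h.1 + 1, h.2.1, h.2.2 - 1) + x (h.1, h.2.1 + 1, h.2.2 - 1)
          = x (h.1 - 1, h.2.1, h.2.2 + 1) + x (h.1, h.2.1 - 1, h.2.2 + 1) ∧
      x (h.1, h.2.1 + 1, h.2.2 - 1) + x (h.1 - 1, h.2.1 + 1, h.2.2)
          = x (h.1, h.2.1 - 1, h.2.2 + 1) + x (h.1 + 1, h.2.1 - 1, h.2.2))}

/-- The projection of a BZ triangle to its boundary weight data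
`(λ₁,…,λ_{m−1}; μ₁,…,μ_{m−1}; ν₁,…,ν_{m−1}) ∈ ℤ^{3(m−1)}`, given by pairwise sums of
neighboring boundary labels. -/
def pr (x : (ℤ × ℤ × ℤ) → ℤ) : Fin 3 × Fin (m - 1) → ℤ := fun q =>
  let i : ℤ := ((q.2 : ℕ) : ℤ) + 1
  if q.1 = 0 then
    x (2 * ((m : ℤ) - i) - 1, 2 * (i - 1), 0) + x (2 * ((m : ℤ) - i) - 2, 2 * i - 1, 0)
  else if q.1 = 1 then
    x (0, 2 * ((m : ℤ) - i) - 1, 2 * (i - 1)) + x (0, 2 * ((m : ℤ) - i) - 2, 2 * i - 1)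
  else
    x (2 * (i - 1), 0, 2 * ((m : ℤ) - i) - 1) + x (2 * i - 1, 0, 2 * ((m : ℤ) - i) - 2)

/-- The `m²` vertices of the tripod polytope `P_{0,3}(ℤ/mℤ)`, realized as 0/1 vectors
in `ℤ^{3(m−1)}`: labelings of the three tripod edges by fundamental weights whose
indices sum to `0 mod m`. -/
def vtx : Set (Fin 3 × Fin (m - 1) → ℤ) :=
  {w | ∃ f : Fin 3 → ZMod m, f 0 + f 1 + f 2 = 0 ∧
    w = fun q => if f q.1 = (((q.2 : ℕ) + 1 : ℕ) : ZMod m) then 1 else 0}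

end BZsetup

/-
The vector `w` is the boundary projection of the 0/1 BZ triangle `bzWitness`, whose support is
the points with third coordinate `1` strictly inside the triangle together with four points
closing that row off at the boundary. Around each hexagon centred on that row both sides of every
hexagon condition equal `1`; around all other hexagons every label vanishes.

For the non-membership, `w` is the sum of the tripod vectors of the labelings `(1, 2, -2)` and
`(-1, 0, 0)`, neither of which sums to `0` in `ℤ/mℤ`. The additive functional
`tripodFunctional` sends a tripod vector to a sum of `tripodWeight`s; for `m > 3` this is
nonnegative whenever the labels sum to `0`, so it is nonnegative on the whole semigroup, while it
takes the value `-2` on `w`.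
-/

namespace BZsetup

def bzWitness (m : ℕ) (p : ℤ × ℤ × ℤ) : ℤ :=
  if (p.1 = 1 ∧ p.2.1 = 2 * m - 4 ∧ p.2.2 = 0) ∨ (p.1 = 2 * m - 4 ∧ p.2.1 = 1 ∧ p.2.2 = 0) ∨
      (p.1 = 0 ∧ p.2.1 = 2 * m - 5 ∧ p.2.2 = 2) ∨ (p.1 = 2 * m - 5 ∧ p.2.1 = 0 ∧ p.2.2 = 2) ∨
      (p.2.2 = 1 ∧ p.1 % 2 = 0 ∧ 2 ≤ p.1 ∧ 2 ≤ p.2.1 ∧ p.1 + p.2.1 = 2 * m - 4)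
    then 1 else 0

theorem bzWitness_around_hexagon {m : ℕ} {a b c : ℤ} (ha : a % 2 = 1) (hb : b % 2 = 1)
    (hc : c % 2 = 1) (ha₀ : 0 ≤ a) (hb₀ : 0 ≤ b) (hc₀ : 0 ≤ c) (hsum : a + b + c = 2 * m - 3) :
    bzWitness m (a + 1, b - 1, c) = (if c = 1 ∧ a ≤ 2 * m - 7 then 1 else 0) ∧
    bzWitness m (a - 1, b + 1, c) = (if c = 1 ∧ 3 ≤ a then 1 else 0) ∧
    bzWitness m (a + 1, b, c - 1) = (if c = 1 ∧ a = 2 * m - 5 then 1 else 0) ∧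
    bzWitness m (a - 1, b, c + 1) = (if c = 1 ∧ a = 1 then 1 else 0) ∧
    bzWitness m (a, b + 1, c - 1) = (if c = 1 ∧ a = 1 then 1 else 0) ∧
    bzWitness m (a, b - 1, c + 1) = (if c = 1 ∧ a = 2 * m - 5 then 1 else 0) := by
  simp only [bzWitness]
  refine ⟨?_, ?_, ?_, ?_, ?_, ?_⟩ <;> congr 1 <;> apply propext <;> omega

theorem bzWitness_mem_BZ {m : ℕ} (hm : 3 < m) : bzWitness m ∈ BZ m := by
  refine ⟨fun p hp => ?_, fun p => ?_, ?_⟩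
  · simp only [Gset, oneOdd, Set.mem_ofPred_eq, Int.odd_iff, Int.even_iff] at hp
    simp only [bzWitness]
    split_ifs <;> omega
  · simp only [bzWitness]
    split_ifs <;> omega
  · rintro ⟨a, b, c⟩ ha hb hc ha₀ hb₀ hc₀ hsum
    simp only [Int.odd_iff] at ha hb hc ha₀ hb₀ hc₀ hsum ⊢
    obtain ⟨h₁, h₂, h₃, h₄, h₅, h₆⟩ := bzWitness_around_hexagon ha hb hc ha₀ hb₀ hc₀ hsum
    rw [h₁, h₂, h₃, h₄, h₅, h₆]
    refine ⟨?_, ?_, ?_⟩ <;> split_ifs <;> omega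

def targetVec (m : ℕ) : Fin 3 × Fin (m - 1) → ℤ := fun q =>
  if (q.1 = 0 ∧ ((q.2 : ℕ) = 0 ∨ (q.2 : ℕ) = m - 2)) ∨
      (q.1 = 1 ∧ (q.2 : ℕ) = 1) ∨ (q.1 = 2 ∧ (q.2 : ℕ) = m - 3)
    then 1 else 0

theorem pr_bzWitness {m : ℕ} (hm : 3 < m) : pr m (bzWitness m) = targetVec m := by
  funext ⟨k, j⟩
  have hj := j.isLt
  fin_cases k <;> simp only [pr, bzWitness, targetVec] <;> norm_num [Fin.ext_iff] <;>
    split_ifs <;> omega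

theorem natCast_ne_zero_of_lt {m n : ℕ} (h₀ : 0 < n) (h : n < m) : (n : ZMod m) ≠ 0 := by
  rw [Ne, ZMod.natCast_eq_zero_iff]
  exact fun hdvd => absurd (Nat.le_of_dvd h₀ hdvd) (by omega)

def weightIndex (m : ℕ) (j : Fin (m - 1)) : ZMod m := (((j : ℕ) + 1 : ℕ) : ZMod m)

def tripodVec (m : ℕ) (f : Fin 3 → ZMod m) : Fin 3 × Fin (m - 1) → ℤ := fun q =>
  if f q.1 = weightIndex m q.2 then 1 else 0

theorem natCast_eq_weightIndex_iff {m n : ℕ} (hn : n < m) (j : Fin (m - 1)) :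
    (n : ZMod m) = weightIndex m j ↔ n = j + 1 := by
  have := j.isLt
  rw [weightIndex, ZMod.natCast_eq_natCast_iff', Nat.mod_eq_of_lt hn, Nat.mod_eq_of_lt (by omega)]

theorem weightIndex_injective (m : ℕ) : Function.Injective (weightIndex m) := by
  intro i j h
  rw [weightIndex, natCast_eq_weightIndex_iff (by omega)] at h
  exact Fin.ext (by omega)

theorem weightIndex_ne_zero {m : ℕ} (j : Fin (m - 1)) : weightIndex m j ≠ 0 := by
  have := j.isLt
  intro h
  rw [← Nat.cast_zero, eq_comm, natCast_eq_weightIndex_iff (by omega)] at h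
  omega

theorem exists_weightIndex_eq {m : ℕ} [NeZero m] {a : ZMod m} (ha : a ≠ 0) :
    ∃ j, weightIndex m j = a := by
  have hpos : a.val ≠ 0 := (ZMod.val_ne_zero a).mpr ha
  refine ⟨⟨a.val - 1, by have := ZMod.val_lt a; omega⟩, ?_⟩
  rw [weightIndex, Fin.val_mk, Nat.sub_add_cancel (Nat.one_le_iff_ne_zero.mpr hpos),
    ZMod.natCast_zmod_val]

theorem sum_ite_eq_weightIndex {m : ℕ} [NeZero m] (a : ZMod m) (g : ZMod m → ℤ) (hg : g 0 = 0) :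
    ∑ j, (if a = weightIndex m j then g (weightIndex m j) else 0) = g a := by
  by_cases ha : a = 0
  · simp [ha, hg, (weightIndex_ne_zero _).symm]
  · obtain ⟨j₀, rfl⟩ := exists_weightIndex_eq ha
    simp [(weightIndex_injective m).eq_iff]

def tripodWeight (m : ℕ) : Fin 3 → ZMod m → ℤ :=
  ![fun a => if a = 1 ∨ a = -1 then -1 else 0,
    fun b => if b = 0 ∨ b = 2 then 0 else 1,
    fun c => if c = 0 ∨ c = -2 then 0 else 1]

theorem tripodWeight_apply_zero {m : ℕ} (hm : 1 < m) (k : Fin 3) : tripodWeight m k 0 = 0 := by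
  have h₁ : (1 : ZMod m) ≠ 0 := by exact_mod_cast natCast_ne_zero_of_lt one_pos hm
  fin_cases k <;> simp [tripodWeight, h₁, h₁.symm]

theorem tripodWeight_nonneg {m : ℕ} (hm : 3 < m) {a b c : ZMod m} (h : a + b + c = 0) :
    0 ≤ tripodWeight m 0 a + tripodWeight m 1 b + tripodWeight m 2 c := by
  have h₁ : (1 : ZMod m) ≠ 0 := by exact_mod_cast natCast_ne_zero_of_lt one_pos (by omega)
  have h₃ : (3 : ZMod m) ≠ 0 := by exact_mod_cast natCast_ne_zero_of_lt (by norm_num) hm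
  simp only [tripodWeight, Matrix.cons_val]
  -- A negative value forces `a = ±1`, `b ∈ {0, 2}` and `c ∈ {0, -2}`, so `a + b + c ∈ {±1, ±3}`.
  split_ifs <;> grind

def tripodFunctional (m : ℕ) : (Fin 3 × Fin (m - 1) → ℤ) →+ ℤ :=
  AddMonoidHom.mk' (fun v => ∑ q, tripodWeight m q.1 (weightIndex m q.2) * v q)
    (fun v w => by simp only [Pi.add_apply, mul_add, Finset.sum_add_distrib])

theorem tripodFunctional_tripodVec {m : ℕ} (hm : 1 < m) (f : Fin 3 → ZMod m) :
    tripodFunctional m (tripodVec m f) = ∑ k, tripodWeight m k (f k) := by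
  have : NeZero m := ⟨by omega⟩
  simp only [tripodFunctional, AddMonoidHom.mk'_apply, tripodVec, mul_ite, mul_one, mul_zero,
    Fintype.sum_prod_type]
  exact Finset.sum_congr rfl fun k _ =>
    sum_ite_eq_weightIndex _ _ (tripodWeight_apply_zero hm k)

theorem targetVec_eq {m : ℕ} (hm : 3 < m) :
    targetVec m = tripodVec m ![1, 2, -2] + tripodVec m ![-1, 0, 0] := by
  funext ⟨k, j⟩
  have hj := j.isLt
  have hcast : ∀ n < m, ((n : ℕ) : ZMod m) = weightIndex m j ↔ n = j + 1 :=
    fun n hn => natCast_eq_weightIndex_iff hn j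
  have h₀ := hcast 0 (by omega)
  have h₁ := hcast 1 (by omega)
  have h₂ := hcast 2 (by omega)
  have hneg₁ := hcast (m - 1) (by omega)
  have hneg₂ := hcast (m - 2) (by omega)
  rw [Nat.cast_sub (by omega), ZMod.natCast_self, zero_sub] at hneg₁ hneg₂
  push_cast at h₀ h₁ h₂ hneg₁ hneg₂
  fin_cases k <;> simp [targetVec, tripodVec, h₀, h₁, h₂, hneg₁, hneg₂] <;> split_ifs <;> omega

theorem tripodFunctional_nonneg_of_mem_closure {m : ℕ} (hm : 3 < m)
    {v : Fin 3 × Fin (m - 1) → ℤ} (hv : v ∈ AddSubmonoid.closure (vtx m)) :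
    0 ≤ tripodFunctional m v := by
  refine AddSubmonoid.closure_le (S := (AddSubmonoid.nonneg ℤ).comap (tripodFunctional m)).mpr
    ?_ hv
  rintro _ ⟨f, hf, rfl⟩
  change 0 ≤ tripodFunctional m (tripodVec m f)
  rw [tripodFunctional_tripodVec (by omega), Fin.sum_univ_three]
  exact tripodWeight_nonneg hm hf

theorem tripodFunctional_targetVec {m : ℕ} (hm : 3 < m) :
    tripodFunctional m (targetVec m) = -2 := by
  rw [targetVec_eq hm, map_add, tripodFunctional_tripodVec (by omega),
    tripodFunctional_tripodVec (by omega)]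
  simp [Fin.sum_univ_three, tripodWeight]

end BZsetup

open BZsetup in
/-- For `m > 3` the inclusion `R^{pr}_{0,3}(ℤ/mℤ) ⊆ pr(BZ(SL_m(ℂ)))` is strict: the
vector `(1,0,…,0,1; 0,1,0,…,0; 0,…,0,1,0) ∈ ℤ^{3(m−1)}` (i.e. `λ = ω₁ + ω_{m−1}`,
`μ = ω₂`, `ν = ω_{m−2}`) is the boundary projection of an explicit BZ triangle, but
does not lie in the semigroup `R^{pr}_{0,3}(ℤ/mℤ)` generated by the `m²` vertices of
`P_{0,3}(ℤ/mℤ)`. -/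
theorem stmt16 (m : ℕ) (hm : 3 < m) :
    let w : Fin 3 × Fin (m - 1) → ℤ := fun q =>
      if (q.1 = 0 ∧ ((q.2 : ℕ) = 0 ∨ (q.2 : ℕ) = m - 2)) ∨
          (q.1 = 1 ∧ (q.2 : ℕ) = 1) ∨ (q.1 = 2 ∧ (q.2 : ℕ) = m - 3)
        then 1 else 0
    (∃ x ∈ BZ m, pr m x = w) ∧ w ∉ AddSubmonoid.closure (vtx m) := by
  change (∃ x ∈ BZ m, pr m x = targetVec m) ∧ targetVec m ∉ AddSubmonoid.closure (vtx m)
  refine ⟨⟨bzWitness m, bzWitness_mem_BZ hm, pr_bzWitness hm⟩, fun hw => ?_⟩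
  have := tripodFunctional_nonneg_of_mem_closure hm hw
  rw [tripodFunctional_targetVec hm] at this
  omega
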